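/- arXiv:1209.5092 — 2 statements merged into one kernel-verified Lean document; each statement's English description precedes it below -/
import Mathlib

section
/- Let H be a self-adjoint operator bounded below on a Hilbert space, with lowest eigenvalue E₀(H) and E₁(H) the second point of the spectrum (counted with multiplicity, or the bottom of the essential spectrum). Let ψ be a unit vector in the domain of H with ⟨ψ, Hψ⟩ < E₁(H). Then E₀(H) ≥ ⟨ψ, Hψ⟩ - (⟨Hψ, Hψ⟩ - ⟨ψ, Hψ⟩²)/(E₁(H) - ⟨ψ, Hψ⟩). -/
/-!
Let `E₀` be the bottom of the numerical range of `H`. It is the least point of the spectrum: if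
`H - E₀` were invertible, the Cauchy–Schwarz inequality for the positive form `⟪x, (H - E₀) x⟫`
would make it coercive. For any other spectral point `l > E₀`, approximate eigenvectors for `E₀`
and `l` are almost orthogonal and span a plane on which `⟪x, H x⟫ ≤ (l + o(1)) ‖x‖²`; every
hyperplane meets that plane, so `E₁ ≤ l`. Hence the spectrum misses the interval `(E₀, E₁)`.

For a self-adjoint operator, `‖(H - c) x‖ ≥ dist(c, σ(H)) ‖x‖`. Taking for `c` the midpoint of
`[E₀, E₁]` gives `⟪(H - E₀) ψ, (H - E₁) ψ⟫ ≥ 0`, that is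
`(⟪ψ, H ψ⟫ - E₀) (E₁ - ⟪ψ, H ψ⟫) ≤ ‖H ψ‖² - ⟪ψ, H ψ⟫²`, which is Temple's inequality.
-/

open scoped InnerProductSpace

/-- The second min-max (Courant–Fischer) value of a bounded self-adjoint operator. -/
noncomputable def secondMinMax {E : Type*} [NormedAddCommGroup E] [InnerProductSpace ℝ E]
    (H : E →L[ℝ] E) : ℝ :=
  ⨆ v : E, ⨅ ψ : {ψ : E // ‖ψ‖ = 1 ∧ ⟪ψ, v⟫_ℝ = 0}, ⟪(ψ : E), H ψ⟫_ℝ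

section Spectrum

variable {R A : Type*} [CommRing R] [Ring A] [Algebra R A]

theorem spectrum.mem_iff_not_isUnit_sub_smul_one {a : A} {r : R} :
    r ∈ spectrum R a ↔ ¬IsUnit (a - r • 1) := by
  rw [spectrum.mem_iff, Algebra.algebraMap_eq_smul_one, ← IsUnit.neg_iff, neg_sub]

theorem spectrum.add_mem_of_mem_sub_smul_one {a : A} {r s : R}
    (h : r ∈ spectrum R (a - s • 1)) : r + s ∈ spectrum R a := by
  rw [spectrum.mem_iff_not_isUnit_sub_smul_one] at h ⊢
  rwa [sub_sub, ← add_smul, add_comm s] at h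

end Spectrum

namespace ContinuousLinearMap

variable {E : Type*} [NormedAddCommGroup E] [InnerProductSpace ℝ E]

theorem neg_opNorm_le_inner_apply_self (H : E →L[ℝ] E) {x : E} (hx : ‖x‖ = 1) :
    -‖H‖ ≤ ⟪x, H x⟫_ℝ := by
  have := (abs_real_inner_le_norm x (H x)).trans
    (mul_le_mul_of_nonneg_left (H.le_opNorm x) (norm_nonneg x))
  rw [hx, one_mul, mul_one] at this
  exact (abs_le.mp this).1

theorem inner_apply_inv_norm_smul (H : E →L[ℝ] E) (x : E) :
    ⟪‖x‖⁻¹ • x, H (‖x‖⁻¹ • x)⟫_ℝ = ⟪x, H x⟫_ℝ / ‖x‖ ^ 2 := by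
  rw [map_smul, real_inner_smul_left, real_inner_smul_right, div_eq_inv_mul, ← mul_assoc,
    ← mul_inv, ← sq]

theorem bddBelow_range_inner_apply_self (H : E →L[ℝ] E) {p : E → Prop}
    (hp : ∀ x, p x → ‖x‖ = 1) : BddBelow (Set.range fun x : Subtype p => ⟪(x : E), H x⟫_ℝ) :=
  ⟨-‖H‖, by rintro _ ⟨x, rfl⟩; exact H.neg_opNorm_le_inner_apply_self (hp x x.2)⟩

theorem IsPositive.norm_apply_sq_le {T : E →L[ℝ] E} (hT : T.IsPositive) (x : E) :
    ‖T x‖ ^ 2 ≤ ‖T‖ * ⟪x, T x⟫_ℝ := by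
  have hcs := LinearMap.BilinForm.apply_mul_apply_le_of_forall_zero_le
    ((innerₗ E).compl₂ (T : E →ₗ[ℝ] E)) hT.inner_nonneg_right x (T x)
  simp only [LinearMap.compl₂_apply, coe_coe, innerₗ_apply_apply] at hcs
  have hsym : ⟪x, T (T x)⟫_ℝ = ⟪T x, T x⟫_ℝ := (hT.isSymmetric x (T x)).symm
  rw [hsym, real_inner_self_eq_norm_sq] at hcs
  have hop : ⟪T x, T (T x)⟫_ℝ ≤ ‖T‖ * ‖T x‖ ^ 2 := by
    rw [sq, mul_left_comm]
    exact (real_inner_le_norm _ _).trans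
      (mul_le_mul_of_nonneg_left (T.le_opNorm _) (norm_nonneg _))
  have hnn := hT.inner_nonneg_right x
  rcases (sq_nonneg ‖T x‖).eq_or_lt with h0 | hpos
  · rw [← h0]
    positivity
  · nlinarith [mul_le_mul_of_nonneg_left hop hnn]

theorem IsPositive.exists_pos_mul_norm_sq_le_inner_of_isUnit {T : E →L[ℝ] E}
    (hT : T.IsPositive) (hu : IsUnit T) : ∃ k > 0, ∀ x, k * ‖x‖ ^ 2 ≤ ⟪x, T x⟫_ℝ := by
  obtain ⟨u, rfl⟩ := hu
  set C := ‖(↑u⁻¹ : E →L[ℝ] E)‖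
  refine ⟨(C ^ 2 * ‖(u : E →L[ℝ] E)‖ + 1)⁻¹, by positivity, fun x => ?_⟩
  have hx : ‖x‖ ≤ C * ‖(u : E →L[ℝ] E) x‖ := by
    have hinv : (↑u⁻¹ : E →L[ℝ] E) ((u : E →L[ℝ] E) x) = x := by
      rw [← mul_apply_eq_comp, u.inv_mul, one_apply_eq_self]
    simpa only [hinv] using (↑u⁻¹ : E →L[ℝ] E).le_opNorm ((u : E →L[ℝ] E) x)
  rw [inv_mul_le_iff₀ (by positivity)]
  have hn := hT.norm_apply_sq_le x
  have hnn := hT.inner_nonneg_right x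
  calc ‖x‖ ^ 2 ≤ C ^ 2 * ‖(u : E →L[ℝ] E) x‖ ^ 2 := by rw [← mul_pow]; gcongr
    _ ≤ _ := by nlinarith [mul_le_mul_of_nonneg_left hn (sq_nonneg C)]

noncomputable def numericalRangeInf (H : E →L[ℝ] E) : ℝ :=
  ⨅ x : {x : E // ‖x‖ = 1}, ⟪(x : E), H x⟫_ℝ

theorem numericalRangeInf_le (H : E →L[ℝ] E) {x : E} (hx : ‖x‖ = 1) :
    H.numericalRangeInf ≤ ⟪x, H x⟫_ℝ :=
  ciInf_le (H.bddBelow_range_inner_apply_self fun _ h => h) ⟨x, hx⟩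

theorem numericalRangeInf_mul_norm_sq_le (H : E →L[ℝ] E) (x : E) :
    H.numericalRangeInf * ‖x‖ ^ 2 ≤ ⟪x, H x⟫_ℝ := by
  rcases eq_or_ne x 0 with rfl | hx
  · simp
  rw [← le_div_iff₀ (by positivity), ← inner_apply_inv_norm_smul]
  exact H.numericalRangeInf_le (norm_smul_inv_norm hx)

theorem le_numericalRangeInf [Nontrivial E] (H : E →L[ℝ] E) {c : ℝ}
    (h : ∀ x, ‖x‖ = 1 → c ≤ ⟪x, H x⟫_ℝ) : c ≤ H.numericalRangeInf :=
  have : Nonempty {x : E // ‖x‖ = 1} :=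
    let ⟨x, hx⟩ := exists_norm_eq E zero_le_one; ⟨⟨x, hx⟩⟩
  le_ciInf fun x => h x x.2

theorem secondMinMax_le_of_linearIndependent {H : E →L[ℝ] E} {u w : E}
    (huw : LinearIndependent ℝ ![u, w]) {c : ℝ}
    (h : ∀ α β : ℝ, ⟪α • u + β • w, H (α • u + β • w)⟫_ℝ ≤ c * ‖α • u + β • w‖ ^ 2) :
    secondMinMax H ≤ c := by
  refine ciSup_le fun v => ?_
  obtain ⟨α, β, hne, horth⟩ : ∃ α β : ℝ, (α ≠ 0 ∨ β ≠ 0) ∧ ⟪α • u + β • w, v⟫_ℝ = 0 := by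
    by_cases hu : ⟪u, v⟫_ℝ = 0
    · exact ⟨1, 0, .inl one_ne_zero, by simp [hu]⟩
    · refine ⟨⟪w, v⟫_ℝ, -⟪u, v⟫_ℝ, .inr (neg_ne_zero.mpr hu), ?_⟩
      rw [inner_add_left, real_inner_smul_left, real_inner_smul_left]
      ring
  set x := α • u + β • w
  have hx : x ≠ 0 := fun h0 => by
    have := LinearIndependent.pair_iff.mp huw α β h0
    tauto
  calc ⨅ ψ : {ψ : E // ‖ψ‖ = 1 ∧ ⟪ψ, v⟫_ℝ = 0}, ⟪(ψ : E), H ψ⟫_ℝ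
      ≤ ⟪‖x‖⁻¹ • x, H (‖x‖⁻¹ • x)⟫_ℝ :=
        ciInf_le (H.bddBelow_range_inner_apply_self fun _ h => h.1)
          ⟨‖x‖⁻¹ • x, norm_smul_inv_norm hx, by rw [real_inner_smul_left, horth, mul_zero]⟩
    _ = ⟪x, H x⟫_ℝ / ‖x‖ ^ 2 := H.inner_apply_inv_norm_smul x
    _ ≤ c := (div_le_iff₀ (pow_pos (norm_pos_iff.mpr hx) 2)).mpr (h α β)

theorem sq_add_sq_le_two_mul_norm_smul_add_smul_sq {u w : E} (hu : ‖u‖ = 1) (hw : ‖w‖ = 1)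
    (huw : |⟪u, w⟫_ℝ| ≤ 1 / 2) (α β : ℝ) : α ^ 2 + β ^ 2 ≤ 2 * ‖α • u + β • w‖ ^ 2 := by
  rw [norm_add_sq_real, norm_smul, norm_smul, real_inner_smul_left, real_inner_smul_right, hu,
    hw, Real.norm_eq_abs, Real.norm_eq_abs, mul_one, mul_one, sq_abs, sq_abs]
  obtain ⟨hlo, hhi⟩ := abs_le.mp huw
  nlinarith [mul_nonneg (sub_nonneg.mpr hhi) (sq_nonneg (α - β)),
    mul_nonneg (neg_le_iff_add_nonneg.mp hlo) (sq_nonneg (α + β))]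

variable [CompleteSpace E]

theorem _root_.IsSelfAdjoint.sub_smul_one {H : E →L[ℝ] E} (hH : IsSelfAdjoint H) (r : ℝ) :
    IsSelfAdjoint (H - r • 1) :=
  hH.sub ((IsSelfAdjoint.all r).smul (.one _))

theorem _root_.IsSelfAdjoint.isUnit_of_mul_norm_le {T : E →L[ℝ] E} (hT : IsSelfAdjoint T)
    {c : ℝ} (hc : 0 < c) (h : ∀ x, c * ‖x‖ ≤ ‖T x‖) : IsUnit T := by
  rw [isUnit_iff_bijective, bijective_iff_dense_range_and_antilipschitz]
  refine ⟨?_, ⟨(⟨c⁻¹, by positivity⟩ : NNReal), T.antilipschitz_of_bound fun x => ?_⟩⟩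
  · rw [Submodule.topologicalClosure_eq_top_iff, Submodule.eq_bot_iff]
    intro y hy
    have hTy : T y = 0 := by
      have hsym : ⟪T y, T y⟫_ℝ = ⟪T (T y), y⟫_ℝ := (hT.isSymmetric (T y) y).symm
      rw [← inner_self_eq_zero (𝕜 := ℝ), hsym]
      exact hy _ ⟨T y, rfl⟩
    have := h y
    rw [hTy, norm_zero] at this
    exact norm_le_zero_iff.mp (nonpos_of_mul_nonpos_right this hc)
  · show ‖x‖ ≤ c⁻¹ * ‖T x‖
    rw [inv_mul_eq_div, le_div_iff₀ hc, mul_comm]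
    exact h x

theorem _root_.IsSelfAdjoint.exists_norm_apply_sub_smul_le {H : E →L[ℝ] E}
    (hH : IsSelfAdjoint H) {l : ℝ} (hl : l ∈ spectrum ℝ H) {δ : ℝ} (hδ : 0 < δ) :
    ∃ u : E, ‖u‖ = 1 ∧ ‖H u - l • u‖ ≤ δ := by
  rw [spectrum.mem_iff_not_isUnit_sub_smul_one] at hl
  by_contra! hfar
  refine hl ((hH.sub_smul_one l).isUnit_of_mul_norm_le hδ fun x => ?_)
  rcases eq_or_ne x 0 with rfl | hx
  · simp
  have := (hfar _ (norm_smul_inv_norm (𝕜 := ℝ) hx)).le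
  simp only [RCLike.ofReal_real_eq_id, id] at this
  rw [map_smul, smul_comm, ← smul_sub, norm_smul, norm_inv, norm_norm, ← div_eq_inv_mul,
    le_div_iff₀ (norm_pos_iff.mpr hx)] at this
  simpa [mul_comm] using this

theorem isPositive_sub_numericalRangeInf_smul_one {H : E →L[ℝ] E} (hH : IsSelfAdjoint H) :
    (H - H.numericalRangeInf • 1).IsPositive := by
  rw [isPositive_iff]
  refine ⟨(hH.sub_smul_one _).isSymmetric, fun x => ?_⟩
  rw [real_inner_comm, sub_apply, inner_sub_right, smul_apply, one_apply_eq_self,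
    real_inner_smul_right, real_inner_self_eq_norm_sq, sub_nonneg]
  exact H.numericalRangeInf_mul_norm_sq_le x

theorem numericalRangeInf_mem_spectrum [Nontrivial E] {H : E →L[ℝ] E} (hH : IsSelfAdjoint H) :
    H.numericalRangeInf ∈ spectrum ℝ H := by
  rw [spectrum.mem_iff_not_isUnit_sub_smul_one]
  intro hu
  obtain ⟨k, hk, hcoer⟩ :=
    (isPositive_sub_numericalRangeInf_smul_one hH).exists_pos_mul_norm_sq_le_inner_of_isUnit hu
  refine (lt_add_of_pos_right _ hk).not_ge (H.le_numericalRangeInf fun x hx => ?_)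
  have := hcoer x
  rw [hx, sub_apply, inner_sub_right, smul_apply, one_apply_eq_self, real_inner_smul_right,
    real_inner_self_eq_norm_sq, hx] at this
  linarith

theorem numericalRangeInf_le_of_mem_spectrum {H : E →L[ℝ] E} (hH : IsSelfAdjoint H) {l : ℝ}
    (hl : l ∈ spectrum ℝ H) : H.numericalRangeInf ≤ l := by
  refine le_of_forall_pos_le_add fun δ hδ => ?_
  obtain ⟨u, hu, hub⟩ := hH.exists_norm_apply_sub_smul_le hl hδ
  have hnear : ⟪u, H u - l • u⟫_ℝ ≤ δ :=
    (real_inner_le_norm _ _).trans (by rwa [hu, one_mul])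
  rw [inner_sub_right, real_inner_smul_right, real_inner_self_eq_norm_sq, hu] at hnear
  linarith [H.numericalRangeInf_le hu]

theorem _root_.IsSelfAdjoint.isLeast_spectrum [Nontrivial E] {H : E →L[ℝ] E}
    (hH : IsSelfAdjoint H) : IsLeast (spectrum ℝ H) H.numericalRangeInf :=
  ⟨numericalRangeInf_mem_spectrum hH, fun _ hl => numericalRangeInf_le_of_mem_spectrum hH hl⟩

theorem _root_.IsSelfAdjoint.exists_mem_spectrum_abs_mul_norm_le [Nontrivial E]
    {T : E →L[ℝ] E} (hT : IsSelfAdjoint T) : ∃ l ∈ spectrum ℝ T, ∀ x, |l| * ‖x‖ ≤ ‖T x‖ := by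
  have hTT : IsSelfAdjoint (T * T) := by simpa [hT.star_eq] using IsSelfAdjoint.star_mul_self T
  have hinner (x : E) : ⟪x, (T * T) x⟫_ℝ = ‖T x‖ ^ 2 := by
    rw [mul_apply_eq_comp, ← real_inner_self_eq_norm_sq]
    exact (hT.isSymmetric x (T x)).symm
  -- `s = inf ‖T x‖` over unit vectors; factoring `T² - s²` puts `s` or `-s` in the spectrum.
  set s := √(T * T).numericalRangeInf
  have hs : s ^ 2 = (T * T).numericalRangeInf :=
    Real.sq_sqrt ((T * T).le_numericalRangeInf fun x _ => hinner x ▸ sq_nonneg _)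
  have hfac : T * T - (T * T).numericalRangeInf • 1 = (T - s • 1) * (T - (-s) • 1) := by
    ext x
    simp only [← hs, sub_apply, mul_apply_eq_comp, smul_apply, one_apply_eq_self, map_sub,
      map_smul]
    module
  have hmem := numericalRangeInf_mem_spectrum hTT
  rw [spectrum.mem_iff_not_isUnit_sub_smul_one, hfac] at hmem
  have hbound (x : E) : s * ‖x‖ ≤ ‖T x‖ := by
    have := (T * T).numericalRangeInf_mul_norm_sq_le x
    rw [hinner, ← hs, ← mul_pow] at this
    exact le_of_pow_le_pow_left₀ two_ne_zero (norm_nonneg _) this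
  by_cases hplus : IsUnit (T - s • 1)
  · refine ⟨-s, ?_, fun x => ?_⟩
    · exact spectrum.mem_iff_not_isUnit_sub_smul_one.mpr fun hminus => hmem (hplus.mul hminus)
    · rw [abs_neg, abs_of_nonneg (Real.sqrt_nonneg _)]
      exact hbound x
  · refine ⟨s, spectrum.mem_iff_not_isUnit_sub_smul_one.mpr hplus, fun x => ?_⟩
    rw [abs_of_nonneg (Real.sqrt_nonneg _)]
    exact hbound x

theorem _root_.IsSelfAdjoint.inner_sub_smul_sub_smul_nonneg {H : E →L[ℝ] E}
    (hH : IsSelfAdjoint H) {a b : ℝ} (hab : a ≤ b)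
    (hgap : ∀ l ∈ spectrum ℝ H, l ≤ a ∨ b ≤ l) (x : E) :
    0 ≤ ⟪H x - a • x, H x - b • x⟫_ℝ := by
  rcases subsingleton_or_nontrivial E with hE | hE
  · simp [Subsingleton.elim x 0]
  set c := (a + b) / 2 with hc
  set r := (b - a) / 2 with hr
  obtain ⟨l, hl, hbound⟩ := (hH.sub_smul_one c).exists_mem_spectrum_abs_mul_norm_le
  have hrl : r ≤ |l| := by
    rcases hgap _ (spectrum.add_mem_of_mem_sub_smul_one hl) with h | h
    · exact le_abs.mpr (.inr (by linarith))
    · exact le_abs.mpr (.inl (by linarith))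
  have hx : r * ‖x‖ ≤ ‖H x - c • x‖ := by
    simpa using (mul_le_mul_of_nonneg_right hrl (norm_nonneg x)).trans (hbound x)
  have hsplit : ⟪H x - a • x, H x - b • x⟫_ℝ = ‖H x - c • x‖ ^ 2 - r ^ 2 * ‖x‖ ^ 2 := by
    have ha : H x - a • x = (H x - c • x) + r • x := by module
    have hb : H x - b • x = (H x - c • x) - r • x := by module
    rw [ha, hb]
    generalize H x - c • x = y
    simp only [inner_add_left, inner_sub_right, real_inner_smul_left, real_inner_smul_right,
      real_inner_self_eq_norm_sq, real_inner_comm x y, norm_smul, mul_pow, Real.norm_eq_abs,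
      sq_abs]
    ring
  rw [hsplit, sub_nonneg, ← mul_pow]
  exact pow_le_pow_left₀ (by positivity) hx 2

theorem _root_.IsSelfAdjoint.abs_sub_mul_abs_inner_le {H : E →L[ℝ] E} (hH : IsSelfAdjoint H)
    {u w : E} {q l δ : ℝ} (hu : ‖u‖ = 1) (hw : ‖w‖ = 1) (hqu : ‖H u - q • u‖ ≤ δ)
    (hlw : ‖H w - l • w‖ ≤ δ) : |l - q| * |⟪u, w⟫_ℝ| ≤ 2 * δ := by
  have hsym : ⟪H u, w⟫_ℝ = ⟪u, H w⟫_ℝ := hH.isSymmetric u w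
  have hid : (l - q) * ⟪u, w⟫_ℝ = ⟪H u - q • u, w⟫_ℝ - ⟪u, H w - l • w⟫_ℝ := by
    rw [inner_sub_left, inner_sub_right, real_inner_smul_left, real_inner_smul_right, hsym]
    ring
  have h1 : |⟪H u - q • u, w⟫_ℝ| ≤ δ :=
    (abs_real_inner_le_norm _ _).trans (by rwa [hw, mul_one])
  have h2 : |⟪u, H w - l • w⟫_ℝ| ≤ δ :=
    (abs_real_inner_le_norm _ _).trans (by rwa [hu, one_mul])
  rw [← abs_mul, hid]
  exact (abs_sub _ _).trans (by linarith)

theorem _root_.IsSelfAdjoint.inner_smul_add_smul_apply_sub_le {H : E →L[ℝ] E}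
    (hH : IsSelfAdjoint H) {u w : E} {q l δ : ℝ} (hql : q ≤ l) (hu : ‖u‖ = 1) (hw : ‖w‖ = 1)
    (hqu : ‖H u - q • u‖ ≤ δ) (hlw : ‖H w - l • w‖ ≤ δ) (α β : ℝ) :
    ⟪α • u + β • w, H (α • u + β • w) - l • (α • u + β • w)⟫_ℝ ≤ 2 * δ * (α ^ 2 + β ^ 2) := by
  have hsym : ⟪w, H u - l • u⟫_ℝ = ⟪u, H w - l • w⟫_ℝ := by
    have h : ⟪w, H u⟫_ℝ = ⟪u, H w⟫_ℝ := (real_inner_comm (H u) w).trans (hH.isSymmetric u w)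
    rw [inner_sub_right, inner_sub_right, real_inner_smul_right, real_inner_smul_right,
      real_inner_comm u w, h]
  have hexp : ⟪α • u + β • w, H (α • u + β • w) - l • (α • u + β • w)⟫_ℝ =
      α ^ 2 * ⟪u, H u - l • u⟫_ℝ + 2 * α * β * ⟪u, H w - l • w⟫_ℝ +
        β ^ 2 * ⟪w, H w - l • w⟫_ℝ := by
    have : H (α • u + β • w) - l • (α • u + β • w) = α • (H u - l • u) + β • (H w - l • w) := by
      rw [map_add, map_smul, map_smul]
      module
    rw [this]
    simp only [inner_add_left, inner_add_right, real_inner_smul_left, real_inner_smul_right, hsym]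
    ring
  have huu : ⟪u, H u - l • u⟫_ℝ ≤ δ := by
    have : ⟪u, H u - l • u⟫_ℝ = ⟪u, H u - q • u⟫_ℝ + (q - l) := by
      rw [inner_sub_right, inner_sub_right, real_inner_smul_right, real_inner_smul_right,
        real_inner_self_eq_norm_sq, hu]
      ring
    have hnear := real_inner_le_norm u (H u - q • u)
    rw [hu, one_mul] at hnear
    linarith
  have hww : ⟪w, H w - l • w⟫_ℝ ≤ δ :=
    (real_inner_le_norm _ _).trans (by rwa [hw, one_mul])
  have huw : |⟪u, H w - l • w⟫_ℝ| ≤ δ :=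
    (abs_real_inner_le_norm _ _).trans (by rwa [hu, one_mul])
  obtain ⟨hlo, hhi⟩ := abs_le.mp huw
  rw [hexp]
  nlinarith [mul_nonneg (sub_nonneg.mpr hhi) (sq_nonneg (α + β)),
    mul_nonneg (neg_le_iff_add_nonneg.mp hlo) (sq_nonneg (α - β)),
    mul_le_mul_of_nonneg_left huu (sq_nonneg α), mul_le_mul_of_nonneg_left hww (sq_nonneg β)]

theorem _root_.IsSelfAdjoint.secondMinMax_le_of_mem_spectrum {H : E →L[ℝ] E}
    (hH : IsSelfAdjoint H) {q l : ℝ} (hq : q ∈ spectrum ℝ H) (hl : l ∈ spectrum ℝ H)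
    (hql : q < l) : secondMinMax H ≤ l := by
  refine le_of_forall_pos_le_add fun ε hε => ?_
  set δ := min (ε / 4) ((l - q) / 4)
  have hδ : 0 < δ := lt_min (by linarith) (by linarith)
  obtain ⟨u, hu, hqu⟩ := hH.exists_norm_apply_sub_smul_le hq hδ
  obtain ⟨w, hw, hlw⟩ := hH.exists_norm_apply_sub_smul_le hl hδ
  have huw : |⟪u, w⟫_ℝ| ≤ 1 / 2 := by
    have := hH.abs_sub_mul_abs_inner_le hu hw hqu hlw
    rw [abs_of_pos (sub_pos.mpr hql)] at this
    have : δ ≤ (l - q) / 4 := min_le_right _ _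
    nlinarith
  have hnorm := sq_add_sq_le_two_mul_norm_smul_add_smul_sq hu hw huw
  refine secondMinMax_le_of_linearIndependent (u := u) (w := w)
    (LinearIndependent.pair_iff.mpr fun α β h0 => ?_) fun α β => ?_
  · have := hnorm α β
    rw [h0, norm_zero] at this
    exact ⟨by nlinarith, by nlinarith⟩
  · have hray := hH.inner_smul_add_smul_apply_sub_le hql.le hu hw hqu hlw α β
    rw [inner_sub_right, real_inner_smul_right, real_inner_self_eq_norm_sq] at hray
    have : δ ≤ ε / 4 := min_le_left _ _
    nlinarith [hnorm α β]

end ContinuousLinearMap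

/-- Temple's inequality: if `H` is self-adjoint, `ψ` is a unit vector with
`⟨ψ, Hψ⟩ < E₁(H)` (the second min-max value), then the lowest spectral value satisfies
`E₀(H) ≥ ⟨ψ,Hψ⟩ - (⟨Hψ,Hψ⟩ - ⟨ψ,Hψ⟩²)/(E₁(H) - ⟨ψ,Hψ⟩)`. -/
theorem temple_inequality {E : Type*} [NormedAddCommGroup E] [InnerProductSpace ℝ E]
    [CompleteSpace E] (H : E →L[ℝ] E) (hH : IsSelfAdjoint H)
    (ψ : E) (hψ : ‖ψ‖ = 1) (hlt : ⟪ψ, H ψ⟫_ℝ < secondMinMax H) :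
    sInf (spectrum ℝ H) ≥
      ⟪ψ, H ψ⟫_ℝ - (⟪H ψ, H ψ⟫_ℝ - ⟪ψ, H ψ⟫_ℝ ^ 2) / (secondMinMax H - ⟪ψ, H ψ⟫_ℝ) := by
  have : Nontrivial E := nontrivial_of_ne ψ 0 (by rintro rfl; simp at hψ)
  have hleast := hH.isLeast_spectrum
  set q := sInf (spectrum ℝ H)
  set m := secondMinMax H
  set ε := ⟪ψ, H ψ⟫_ℝ
  have hq : q = H.numericalRangeInf := hleast.csInf_eq
  have hqε : q ≤ ε := hq ▸ H.numericalRangeInf_le hψ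
  have hgap (l : ℝ) (hl : l ∈ spectrum ℝ H) : l ≤ q ∨ m ≤ l := by
    rcases (hleast.2 hl).eq_or_lt with h | h
    · exact .inl (hq ▸ h.ge)
    · exact .inr (hH.secondMinMax_le_of_mem_spectrum hleast.1 hl h)
  have hpos := hH.inner_sub_smul_sub_smul_nonneg (hqε.trans hlt.le) hgap ψ
  have hexpand : ⟪H ψ - q • ψ, H ψ - m • ψ⟫_ℝ = ⟪H ψ, H ψ⟫_ℝ - (q + m) * ε + q * m := by
    simp only [inner_sub_left, inner_sub_right, real_inner_smul_left, real_inner_smul_right,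
      real_inner_self_eq_norm_sq, hψ, real_inner_comm ψ (H ψ)]
    ring
  rw [ge_iff_le, sub_le_comm, le_div_iff₀ (sub_pos.mpr hlt)]
  nlinarith
end

section
/- Let H be a self-adjoint operator on a Hilbert space with discrete eigenvalues E₀ ≤ E₁ ≤ ⋯ below its essential spectrum, let W ≥ 0 be a bounded self-adjoint operator, and let ψ be a normalized eigenvector of H with eigenvalue E₀. If ‖W‖ ≤ (E₁ - E₀)/3, then ⟨ψ, (H + W)ψ⟩ - E₁(H + W) ≤ -2(E₁ - E₀)/3 < 0, and consequently by Temple's inequality E₀(H + W) ≥ E₀ + ⟨ψ, Wψ⟩ - 3/(E₁-E₀) · ⟨Wψ, Wψ⟩. -/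
open scoped InnerProductSpace

/-!
Since `ψ` is an eigenvector with eigenvalue `E₀ < E₁`, min-max over the plane spanned by `ψ` and a
unit vector `w ⊥ ψ` gives `⟪w, H w⟫ ≥ E₁`; as `W ≥ 0`, this bound holds for `A = H + W` too and
`E₁(H + W) ≥ E₁`, while `⟪ψ, W ψ⟫ ≤ ‖W‖ ≤ (E₁ - E₀)/3` gives the first claim.

Writing `v = a ψ + u` with `u ⊥ ψ`, the form of `A` is bounded below by that of the `2 × 2` matrix
`[[q, σ], [σ, E₁]]`, where `q = ⟪ψ, A ψ⟫ = E₀ + ⟪ψ, W ψ⟫` and `σ = ‖A ψ - q ψ‖ ≤ ‖W ψ‖`. Its lowest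
value is at least `q - k` as soon as `σ² ≤ (E₁ - q) k` (Temple), and `k = 3 ‖W ψ‖² / (E₁ - E₀)`
qualifies since `E₁ - q ≥ 2 (E₁ - E₀)/3`. A lower bound `R ‖v‖² ≤ ⟪v, A v⟫` keeps `A - x` invertible
for `x < R` (Lax–Milgram), and the spectrum is nonempty because the spectral radius of a
self-adjoint operator is its norm, so `R ≤ sInf (spectrum ℝ A)`.
-/

lemma two_mul_mul_le_of_sq_le_mul {x y z g k : ℝ} (hg : 0 ≤ g) (hk : 0 ≤ k)
    (hz : z ^ 2 ≤ g * k) : 2 * x * y * z ≤ k * x ^ 2 + g * y ^ 2 := by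
  rcases hk.eq_or_lt with rfl | hk
  · have : z = 0 := by nlinarith [sq_nonneg z]
    subst this
    nlinarith [sq_nonneg y]
  · nlinarith [sq_nonneg (k * x - y * z), mul_nonneg (sub_nonneg.2 hz) (sq_nonneg y)]

lemma exists_sq_add_sq_eq_one_mul_add_mul_eq_zero (x y : ℝ) :
    ∃ a b : ℝ, a ^ 2 + b ^ 2 = 1 ∧ a * x + b * y = 0 := by
  rcases eq_or_ne (x ^ 2 + y ^ 2) 0 with h | h
  · exact ⟨1, 0, by ring, by nlinarith [sq_nonneg x, sq_nonneg y]⟩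
  · refine ⟨y / √(x ^ 2 + y ^ 2), -x / √(x ^ 2 + y ^ 2), ?_, by ring⟩
    rw [div_pow, div_pow, neg_sq, Real.sq_sqrt (by positivity)]
    field_simp
    ring

open ContinuousLinearMap

section InnerProductSpace

variable {E : Type*} [NormedAddCommGroup E] [InnerProductSpace ℝ E]

lemma norm_sub_inner_smul_sq_le {ψ : E} (hψ : ‖ψ‖ = 1) (x : E) :
    ‖x - ⟪ψ, x⟫_ℝ • ψ‖ ^ 2 ≤ ‖x‖ ^ 2 := by
  rw [norm_sub_sq_real, real_inner_smul_right, real_inner_comm ψ x, norm_smul, hψ,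
    Real.norm_eq_abs, mul_one, sq_abs]
  nlinarith [sq_nonneg ⟪ψ, x⟫_ℝ]

namespace ContinuousLinearMap

lemma abs_inner_apply_self_le_opNorm (A : E →L[ℝ] E) {u : E} (hu : ‖u‖ = 1) :
    |⟪u, A u⟫_ℝ| ≤ ‖A‖ := by
  simpa [hu] using (abs_real_inner_le_norm u (A u)).trans
    (mul_le_mul_of_nonneg_left (A.le_opNorm u) (norm_nonneg u))

lemma inner_normalize_apply_normalize (A : E →L[ℝ] E) (v : E) :
    ⟪‖v‖⁻¹ • v, A (‖v‖⁻¹ • v)⟫_ℝ = ⟪v, A v⟫_ℝ / ‖v‖ ^ 2 := by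
  rw [map_smul, real_inner_smul_left, real_inner_smul_right]
  ring

lemma inner_add_apply_add {A : E →L[ℝ] E} (hA : A.IsSymmetric) (x y : E) :
    ⟪x + y, A (x + y)⟫_ℝ = ⟪x, A x⟫_ℝ + 2 * ⟪y, A x⟫_ℝ + ⟪y, A y⟫_ℝ := by
  have hsymm : ⟪x, A y⟫_ℝ = ⟪y, A x⟫_ℝ := by
    rw [← coe_coe A, ← hA, real_inner_comm]
  rw [map_add, inner_add_left, inner_add_right, inner_add_right, hsymm]
  ring

lemma inner_apply_self_of_eigenvector {A : E →L[ℝ] E} {ψ : E} {μ : ℝ} (hψ : ‖ψ‖ = 1)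
    (heig : A ψ = μ • ψ) : ⟪ψ, A ψ⟫_ℝ = μ := by
  rw [heig, real_inner_smul_right, real_inner_self_eq_norm_sq, hψ]
  ring

end ContinuousLinearMap

section SecondMinMax

lemma bddBelow_inner_apply_self_unit_orthogonal (A : E →L[ℝ] E) (v : E) :
    BddBelow (Set.range fun u : {u : E // ‖u‖ = 1 ∧ ⟪u, v⟫_ℝ = 0} => ⟪(u : E), A u⟫_ℝ) :=
  ⟨-‖A‖, by
    rintro _ ⟨u, rfl⟩
    exact neg_le_of_abs_le (A.abs_inner_apply_self_le_opNorm u.2.1)⟩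

lemma secondMinMax_le_of_forall_exists (A : E →L[ℝ] E) {M : ℝ}
    (h : ∀ v, ∃ u, ‖u‖ = 1 ∧ ⟪u, v⟫_ℝ = 0 ∧ ⟪u, A u⟫_ℝ ≤ M) : secondMinMax A ≤ M :=
  ciSup_le fun v => by
    obtain ⟨u, hu, huv, hM⟩ := h v
    exact ciInf_le_of_le (bddBelow_inner_apply_self_unit_orthogonal A v) ⟨u, hu, huv⟩ hM

lemma secondMinMax_mono {A B : E →L[ℝ] E} (h : ∀ v, ⟪v, A v⟫_ℝ ≤ ⟪v, B v⟫_ℝ) :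
    secondMinMax A ≤ secondMinMax B := by
  refine ciSup_mono ⟨‖B‖, ?_⟩ fun v => ?_
  · rintro _ ⟨v, rfl⟩
    rcases isEmpty_or_nonempty {u : E // ‖u‖ = 1 ∧ ⟪u, v⟫_ℝ = 0} with _ | ⟨⟨u⟩⟩
    · simp only [iInf_of_isEmpty, Real.sInf_empty, norm_nonneg]
    · exact ciInf_le_of_le (bddBelow_inner_apply_self_unit_orthogonal B v) u
        (le_of_abs_le (B.abs_inner_apply_self_le_opNorm u.2.1))
  · rcases isEmpty_or_nonempty {u : E // ‖u‖ = 1 ∧ ⟪u, v⟫_ℝ = 0} with _ | _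
    · simp only [iInf_of_isEmpty, le_refl]
    · exact ciInf_mono (bddBelow_inner_apply_self_unit_orthogonal A v) fun u => h u

lemma secondMinMax_le_max_of_eigenvector {H : E →L[ℝ] E} (hH : H.IsSymmetric) {ψ w : E}
    {μ : ℝ} (hψ : ‖ψ‖ = 1) (heig : H ψ = μ • ψ) (hw : ‖w‖ = 1) (hψw : ⟪ψ, w⟫_ℝ = 0) :
    secondMinMax H ≤ max μ ⟪w, H w⟫_ℝ := by
  refine secondMinMax_le_of_forall_exists H fun v => ?_
  obtain ⟨a, b, hab, habv⟩ := exists_sq_add_sq_eq_one_mul_add_mul_eq_zero ⟪ψ, v⟫_ℝ ⟪w, v⟫_ℝ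
  have horth : ⟪a • ψ, b • w⟫_ℝ = 0 := by
    rw [real_inner_smul_left, real_inner_smul_right, hψw]; ring
  have hcross : ⟪b • w, H (a • ψ)⟫_ℝ = 0 := by
    rw [map_smul, heig, real_inner_smul_left, real_inner_smul_right, real_inner_smul_right,
      real_inner_comm, hψw]; ring
  refine ⟨a • ψ + b • w, ?_, ?_, ?_⟩
  · rw [← pow_eq_one_iff_of_nonneg (norm_nonneg _) two_ne_zero, norm_add_sq_real, horth,
      norm_smul, norm_smul, hψ, hw, mul_one, mul_one, Real.norm_eq_abs, Real.norm_eq_abs,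
      sq_abs, sq_abs]
    linarith
  · rw [inner_add_left, real_inner_smul_left, real_inner_smul_left, habv]
  · rw [inner_add_apply_add hH, hcross, map_smul, map_smul, real_inner_smul_left,
      real_inner_smul_right, real_inner_smul_left, real_inner_smul_right,
      inner_apply_self_of_eigenvector hψ heig]
    have hM : (a ^ 2 + b ^ 2) * max μ ⟪w, H w⟫_ℝ = max μ ⟪w, H w⟫_ℝ := by rw [hab, one_mul]
    nlinarith [mul_le_mul_of_nonneg_left (le_max_left μ ⟪w, H w⟫_ℝ) (sq_nonneg a),
      mul_le_mul_of_nonneg_left (le_max_right μ ⟪w, H w⟫_ℝ) (sq_nonneg b)]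

lemma secondMinMax_mul_norm_sq_le_of_orthogonal {H : E →L[ℝ] E} (hH : H.IsSymmetric)
    {ψ u : E} {μ : ℝ} (hψ : ‖ψ‖ = 1) (heig : H ψ = μ • ψ) (hμ : μ < secondMinMax H)
    (hu : ⟪ψ, u⟫_ℝ = 0) : secondMinMax H * ‖u‖ ^ 2 ≤ ⟪u, H u⟫_ℝ := by
  rcases eq_or_ne u 0 with rfl | hu0
  · simp
  have hnorm : 0 < ‖u‖ := norm_pos_iff.mpr hu0
  have hw : ‖‖u‖⁻¹ • u‖ = 1 := by
    rw [norm_smul, norm_inv, norm_norm, inv_mul_cancel₀ hnorm.ne']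
  have hψw : ⟪ψ, ‖u‖⁻¹ • u⟫_ℝ = 0 := by rw [real_inner_smul_right, hu, mul_zero]
  have hle := secondMinMax_le_max_of_eigenvector hH hψ heig hw hψw
  rw [le_max_iff, or_iff_right hμ.not_ge, inner_normalize_apply_normalize,
    le_div_iff₀ (by positivity)] at hle
  exact hle

end SecondMinMax

/-- Temple's inequality, for the quadratic form. -/
theorem temple_bound_inner_apply_self {A : E →L[ℝ] E} (hA : A.IsSymmetric) {ψ : E}
    (hψ : ‖ψ‖ = 1) {e k : ℝ} (hk : 0 ≤ k) (he : ⟪ψ, A ψ⟫_ℝ ≤ e)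
    (hgap : ∀ u, ⟪ψ, u⟫_ℝ = 0 → e * ‖u‖ ^ 2 ≤ ⟪u, A u⟫_ℝ)
    (hvar : ‖A ψ - ⟪ψ, A ψ⟫_ℝ • ψ‖ ^ 2 ≤ (e - ⟪ψ, A ψ⟫_ℝ) * k) (v : E) :
    (⟪ψ, A ψ⟫_ℝ - k) * ‖v‖ ^ 2 ≤ ⟪v, A v⟫_ℝ := by
  set q := ⟪ψ, A ψ⟫_ℝ
  set a := ⟪ψ, v⟫_ℝ
  set u := v - a • ψ
  have hψu : ⟪ψ, u⟫_ℝ = 0 := by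
    rw [inner_sub_right, real_inner_smul_right, real_inner_self_eq_norm_sq, hψ]; ring
  have hv : v = a • ψ + u := by simp [u]
  have hnorm : ‖v‖ ^ 2 = a ^ 2 + ‖u‖ ^ 2 := by
    rw [hv, norm_add_sq_real, real_inner_smul_left, hψu, norm_smul, hψ, mul_one,
      Real.norm_eq_abs, sq_abs]
    ring
  have hform : ⟪v, A v⟫_ℝ = a ^ 2 * q + 2 * (a * ⟪u, A ψ - q • ψ⟫_ℝ) + ⟪u, A u⟫_ℝ := by
    rw [hv, inner_add_apply_add hA, map_smul, real_inner_smul_left, real_inner_smul_right,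
      real_inner_smul_right, inner_sub_right, real_inner_smul_right, real_inner_comm ψ u, hψu]
    ring
  have hcross : -(a * ⟪u, A ψ - q • ψ⟫_ℝ) ≤ |a| * (‖u‖ * ‖A ψ - q • ψ‖) := by
    refine (neg_le_abs _).trans ?_
    rw [abs_mul]
    exact mul_le_mul_of_nonneg_left (abs_real_inner_le_norm _ _) (abs_nonneg a)
  have hamgm := two_mul_mul_le_of_sq_le_mul (x := |a|) (y := ‖u‖) (sub_nonneg.2 he) hk hvar
  rw [hnorm, hform]
  nlinarith [hgap u hψu, mul_nonneg hk (sq_nonneg ‖u‖), sq_abs a]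

section Spectrum

variable [CompleteSpace E]

lemma spectrum_nonempty_of_isSelfAdjoint [Nontrivial E] {A : E →L[ℝ] E} (hA : IsSelfAdjoint A) :
    (spectrum ℝ A).Nonempty := by
  rcases eq_or_ne A 0 with rfl | hA0
  · simp [spectrum.zero_eq]
  rw [Set.nonempty_iff_ne_empty]
  intro hempty
  have := spectralRadius_eq_nnnorm A hA
  simp only [spectralRadius, hempty, Set.mem_empty_iff_false, not_false_eq_true, iSup_neg,
    bot_eq_zero', ciSup_const, ENNReal.zero_eq_coe] at this
  exact hA0 (nnnorm_eq_zero.mp this.symm)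

lemma notMem_spectrum_of_lt {A : E →L[ℝ] E} {R x : ℝ} (h : ∀ v, R * ‖v‖ ^ 2 ≤ ⟪v, A v⟫_ℝ)
    (hx : x < R) : x ∉ spectrum ℝ A := by
  rw [spectrum.notMem_iff, IsUnit.sub_iff]
  refine isUnit_of_forall_le_norm_inner_map _ (Real.toNNReal_pos.2 (sub_pos.2 hx)) fun v => ?_
  have hform : ⟪(A - algebraMap ℝ (E →L[ℝ] E) x) v, v⟫_ℝ = ⟪v, A v⟫_ℝ - x * ‖v‖ ^ 2 := by
    rw [sub_apply, ContinuousLinearMap.algebraMap_apply, inner_sub_left, real_inner_comm,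
      real_inner_smul_left, real_inner_self_eq_norm_sq]
  rw [hform, Real.norm_eq_abs, Real.coe_toNNReal _ (sub_pos.2 hx).le]
  nlinarith [h v, le_abs_self (⟪v, A v⟫_ℝ - x * ‖v‖ ^ 2)]

lemma le_sInf_spectrum [Nontrivial E] {A : E →L[ℝ] E} (hA : IsSelfAdjoint A) {R : ℝ}
    (h : ∀ v, R * ‖v‖ ^ 2 ≤ ⟪v, A v⟫_ℝ) : R ≤ sInf (spectrum ℝ A) :=
  le_csInf (spectrum_nonempty_of_isSelfAdjoint hA) fun _ hx =>
    not_lt.1 fun hlt => notMem_spectrum_of_lt h hlt hx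

end Spectrum

end InnerProductSpace

theorem temple_lower_bound_perturbation_general {E : Type*} [NormedAddCommGroup E]
    [InnerProductSpace ℝ E] [CompleteSpace E] (H W : E →L[ℝ] E)
    (hH : IsSelfAdjoint H) (hW : IsSelfAdjoint W) (hWpos : ∀ v : E, 0 ≤ ⟪v, W v⟫_ℝ)
    (E₀ E₁ : ℝ) (hE₁ : E₁ = secondMinMax H)
    (hE₀₁ : E₀ < E₁) (ψ : E) (hψ : ‖ψ‖ = 1) (heig : H ψ = E₀ • ψ)
    (hWnorm : ‖W‖ ≤ (E₁ - E₀) / 3) :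
    ⟪ψ, (H + W) ψ⟫_ℝ - secondMinMax (H + W) ≤ -(2 * (E₁ - E₀) / 3) ∧
      -(2 * (E₁ - E₀) / 3) < 0 ∧
      sInf (spectrum ℝ (H + W)) ≥ E₀ + ⟪ψ, W ψ⟫_ℝ - 3 / (E₁ - E₀) * ⟪W ψ, W ψ⟫_ℝ := by
  have hWψ : ⟪ψ, W ψ⟫_ℝ ≤ (E₁ - E₀) / 3 :=
    (le_of_abs_le (W.abs_inner_apply_self_le_opNorm hψ)).trans hWnorm
  have hq : ⟪ψ, (H + W) ψ⟫_ℝ = E₀ + ⟪ψ, W ψ⟫_ℝ := by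
    rw [add_apply, inner_add_right, inner_apply_self_of_eigenvector hψ heig]
  have hform_le : ∀ v, ⟪v, H v⟫_ℝ ≤ ⟪v, (H + W) v⟫_ℝ := fun v => by
    rw [add_apply, inner_add_right]; linarith [hWpos v]
  have hgap : ∀ u, ⟪ψ, u⟫_ℝ = 0 → E₁ * ‖u‖ ^ 2 ≤ ⟪u, (H + W) u⟫_ℝ := fun u hu => by
    subst hE₁
    exact (secondMinMax_mul_norm_sq_le_of_orthogonal hH.isSymmetric hψ heig hE₀₁ hu).trans
      (hform_le u)
  have hsecond : E₁ ≤ secondMinMax (H + W) := hE₁ ▸ secondMinMax_mono hform_le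
  refine ⟨by rw [hq]; linarith, by linarith, ?_⟩
  have hvar : ‖(H + W) ψ - ⟪ψ, (H + W) ψ⟫_ℝ • ψ‖ ^ 2 ≤
      (E₁ - ⟪ψ, (H + W) ψ⟫_ℝ) * (3 / (E₁ - E₀) * ⟪W ψ, W ψ⟫_ℝ) := by
    rw [← mul_assoc, real_inner_self_eq_norm_sq, hq]
    calc ‖(H + W) ψ - (E₀ + ⟪ψ, W ψ⟫_ℝ) • ψ‖ ^ 2 ≤ ‖W ψ‖ ^ 2 := by
          rw [add_apply, heig, add_smul, add_sub_add_left_eq_sub]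
          exact norm_sub_inner_smul_sq_le hψ (W ψ)
      _ ≤ (E₁ - (E₀ + ⟪ψ, W ψ⟫_ℝ)) * (3 / (E₁ - E₀)) * ‖W ψ‖ ^ 2 := by
          refine le_mul_of_one_le_left (sq_nonneg _) ?_
          rw [mul_div_assoc', le_div_iff₀ (by linarith)]
          linarith
  have hk : 0 ≤ 3 / (E₁ - E₀) * ⟪W ψ, W ψ⟫_ℝ :=
    mul_nonneg (div_nonneg zero_le_three (by linarith)) real_inner_self_nonneg
  have htemple := temple_bound_inner_apply_self (hH.add hW).isSymmetric hψ hk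
    (by rw [hq]; linarith) hgap hvar
  have : Nontrivial E := nontrivial_of_ne ψ 0 (norm_ne_zero_iff.mp (by simp [hψ]))
  rw [hq] at htemple
  exact le_sInf_spectrum (hH.add hW) htemple

/-- If `ψ` is a normalized ground state of `H` with eigenvalue `E₀`, `W ≥ 0` is bounded
self-adjoint with `‖W‖ ≤ (E₁-E₀)/3`, then
`⟨ψ,(H+W)ψ⟩ - E₁(H+W) ≤ -2(E₁-E₀)/3 < 0` and, by Temple's inequality,
`E₀(H+W) ≥ E₀ + ⟨ψ,Wψ⟩ - 3/(E₁-E₀)·⟨Wψ,Wψ⟩`. -/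
theorem temple_lower_bound_perturbation {E : Type*} [NormedAddCommGroup E]
    [InnerProductSpace ℝ E] [CompleteSpace E] (H W : E →L[ℝ] E)
    (hH : IsSelfAdjoint H) (hW : IsSelfAdjoint W) (hWpos : ∀ v : E, 0 ≤ ⟪v, W v⟫_ℝ)
    (E₀ E₁ : ℝ) (hE₀ : E₀ = sInf (spectrum ℝ H)) (hE₁ : E₁ = secondMinMax H)
    (hE₀₁ : E₀ < E₁) (ψ : E) (hψ : ‖ψ‖ = 1) (heig : H ψ = E₀ • ψ)
    (hWnorm : ‖W‖ ≤ (E₁ - E₀) / 3) :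
    ⟪ψ, (H + W) ψ⟫_ℝ - secondMinMax (H + W) ≤ -(2 * (E₁ - E₀) / 3) ∧
      -(2 * (E₁ - E₀) / 3) < 0 ∧
      sInf (spectrum ℝ (H + W)) ≥ E₀ + ⟪ψ, W ψ⟫_ℝ - 3 / (E₁ - E₀) * ⟪W ψ, W ψ⟫_ℝ :=
  temple_lower_bound_perturbation_general H W hH hW hWpos E₀ E₁ hE₁ hE₀₁ ψ hψ heig hWnorm
end
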